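/- Let Δ be a simplicial complex on [m], D a facet of Δ, Δ^D the full simplex on D, and Δ_{∖D} the complex with facets facet(Δ)∖{D}. Then r(A_Δ) ∩ ker A_{Δ_{∖D}} = r(A_{Δ^D}) ∩ ker A_{Δ_{∖D}} = Σ_{E ∈ Δ^D ∖ Δ_{∖D}} N_E. -/

import Mathlib

open Finset

namespace Hier

variable {m : ℕ}

abbrev Cell (I : Fin m → ℕ) := ∀ j, Fin (I j)

variable (I : Fin m → ℕ)

/-- standard inner product on ℚ^I -/
def dot (x y : Cell I → ℚ) : ℚ := ∑ i, x i * y i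

/-- L_E: tables depending only on the coordinates in E -/
def LL (E : Finset (Fin m)) : Submodule ℚ (Cell I → ℚ) where
  carrier := {x | ∀ i i' : Cell I, (∀ j ∈ E, i j = i' j) → x i = x i'}
  zero_mem' := by intro i i' _; rfl
  add_mem' := by
    intro a b ha hb i i' h
    simp only [Pi.add_apply, ha i i' h, hb i i' h]
  smul_mem' := by
    intro c a ha i i' h
    simp only [Pi.smul_apply, ha i i' h]

/-- orthogonal complement w.r.t. the standard inner product -/
def perp (S : Submodule ℚ (Cell I → ℚ)) : Submodule ℚ (Cell I → ℚ) where
  carrier := {y | ∀ x ∈ S, dot I x y = 0}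
  zero_mem' := by intro x hx; simp [dot]
  add_mem' := by
    intro a b ha hb x hx
    have h1 := ha x hx
    have h2 := hb x hx
    simp only [dot, Pi.add_apply, mul_add, Finset.sum_add_distrib] at *
    rw [h1, h2]; ring
  smul_mem' := by
    intro c a ha x hx
    have h1 := ha x hx
    simp only [dot, Pi.smul_apply, smul_eq_mul] at *
    calc ∑ i, x i * (c * a i) = c * ∑ i, x i * a i := by
          rw [Finset.mul_sum]; congr 1; funext i; ring
      _ = 0 := by rw [h1]; ring

/-- incremental subspace N_E -/
def NN (E : Finset (Fin m)) : Submodule ℚ (Cell I → ℚ) :=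
  LL I E ⊓ perp I (⨆ j ∈ E, LL I (E.erase j))

/-- F-marginal of x evaluated at the marginal cell i_F -/
def marg (x : Cell I → ℚ) (F : Finset (Fin m)) (i : Cell I) : ℚ :=
  ∑ j : Cell I, if ∀ k ∈ F, j k = i k then x j else 0

/-- kernel of the configuration determined by a family of facets:
tables all of whose F-marginals vanish, F ∈ Fs -/
def kern (Fs : Finset (Finset (Fin m))) : Submodule ℚ (Cell I → ℚ) where
  carrier := {y | ∀ F ∈ Fs, ∀ i, marg I y F i = 0}
  zero_mem' := by intro F hF i; simp [marg]
  add_mem' := by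
    intro a b ha hb F hF i
    have h1 := ha F hF i
    have h2 := hb F hF i
    simp only [marg, Pi.add_apply] at *
    have key : (∑ j : Cell I, if ∀ k ∈ F, j k = i k then a j + b j else 0)
        = (∑ j : Cell I, if ∀ k ∈ F, j k = i k then a j else 0)
          + (∑ j : Cell I, if ∀ k ∈ F, j k = i k then b j else 0) := by
      rw [← Finset.sum_add_distrib]
      apply Finset.sum_congr rfl
      intro j _
      split <;> simp
    rw [key, h1, h2]; ring
  smul_mem' := by
    intro c a ha F hF i
    have h1 := ha F hF i
    simp only [marg, Pi.smul_apply, smul_eq_mul] at *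
    calc ∑ j : Cell I, (if ∀ k ∈ F, j k = i k then c * a j else 0)
        = c * ∑ j : Cell I, (if ∀ k ∈ F, j k = i k then a j else 0) := by
          rw [Finset.mul_sum]; congr 1; funext j; split <;> simp
      _ = 0 := by rw [h1]; ring

/-- a (finite) abstract simplicial complex on [m] -/
def IsComplex (Δ : Finset (Finset (Fin m))) : Prop :=
  ∀ F ∈ Δ, ∀ F' ⊆ F, F' ∈ Δ

/-- the maximal elements (facets) of Δ -/
def facets (Δ : Finset (Finset (Fin m))) : Finset (Finset (Fin m)) :=
  Δ.filter (fun D => ∀ F ∈ Δ, D ⊆ F → F = D)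

/-- row space of the hierarchical-model configuration A_Δ -/
def rowsp (Δ : Finset (Finset (Fin m))) : Submodule ℚ (Cell I → ℚ) :=
  ⨆ D ∈ facets Δ, LL I D

/-- single partial difference operator ∂_j -/
def pd1 (hI : ∀ j, 0 < I j) (j : Fin m) (x : Cell I → ℚ) : Cell I → ℚ :=
  fun i => x i - x (Function.update i j ⟨0, hI j⟩)

/-- ∂_E: composition of the (commuting) ∂_j, j ∈ E -/
noncomputable def pdE (hI : ∀ j, 0 < I j) (E : Finset (Fin m)) : (Cell I → ℚ) → (Cell I → ℚ) :=
  E.toList.foldr (fun j f => pd1 I hI j ∘ f) id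


/-- the simplicial complex `Δ_{∖D}` obtained by deleting the facet `D` from `facet(Δ)`. -/
def delFacet (Δ : Finset (Finset (Fin m))) (D : Finset (Fin m)) : Finset (Finset (Fin m)) :=
  Δ.filter (fun F => ∃ D' ∈ (facets Δ).erase D, F ⊆ D')

/-!
Averaging over a coordinate `j ∈ E ∖ F` is self-adjoint, kills `N_E` and fixes `L_F`, so
`N_E ⊥ L_F` whenever `E ⊄ F`. Since `N_E` is the orthogonal complement of `Σ_{j ∈ E} L_{E∖j}`
inside `L_E`, induction on `E` gives `L_E = Σ_{E' ⊆ E} N_{E'}`, hence `r(A_Γ) = Σ_{E ∈ Γ} N_E`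
for every complex `Γ`. The kernel `ker A_{Δ∖D}` is the orthogonal complement `W^⊥` of
`W = r(A_{Δ∖D})` and contains `B = Σ_{E ∈ Δ^D ∖ Δ∖D} N_E`. Both `r(A_Δ)` and `r(A_{Δ^D})` have the
form `A + B` with `A ⊆ W`, and the modular law gives `(A + B) ∩ W^⊥ = B`.
-/

section Perp

variable {I}

lemma dot_eq_dotProduct (x y : Cell I → ℚ) : dot I x y = x ⬝ᵥ y := rfl

lemma perp_eq_orthogonal (S : Submodule ℚ (Cell I → ℚ)) :
    perp I S = LinearMap.BilinForm.orthogonal (dotProductBilin ℚ ℚ) S := rfl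

lemma dot_comm (x y : Cell I → ℚ) : dot I x y = dot I y x := dotProduct_comm x y

lemma le_perp_comm {S T : Submodule ℚ (Cell I → ℚ)} : S ≤ perp I T ↔ T ≤ perp I S :=
  ⟨fun h x hx y hy => dot_comm x y ▸ h hy x hx, fun h x hx y hy => dot_comm x y ▸ h hy x hx⟩

lemma perp_iSup {ι : Sort*} (S : ι → Submodule ℚ (Cell I → ℚ)) :
    perp I (⨆ i, S i) = ⨅ i, perp I (S i) :=
  eq_of_forall_le_iff fun T => by
    rw [le_iInf_iff, le_perp_comm, iSup_le_iff]
    exact forall_congr' fun i => le_perp_comm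

lemma disjoint_perp (S : Submodule ℚ (Cell I → ℚ)) : Disjoint S (perp I S) :=
  Submodule.disjoint_def.mpr fun x hx hx' => dotProduct_self_eq_zero.mp (hx' x hx)

lemma isCompl_perp (S : Submodule ℚ (Cell I → ℚ)) : IsCompl S (perp I S) := by
  rw [perp_eq_orthogonal, LinearMap.BilinForm.isCompl_orthogonal_iff_disjoint]
  · exact disjoint_perp S
  · exact fun x y h => (dotProduct_comm y x).trans h

lemma sup_inf_perp_of_le {A B W : Submodule ℚ (Cell I → ℚ)} (hA : A ≤ W)
    (hB : B ≤ perp I W) : (A ⊔ B) ⊓ perp I W = B := by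
  rw [sup_comm, sup_inf_assoc_of_le A hB, (disjoint_perp W).mono_left hA |>.eq_bot, sup_bot_eq]

end Perp

section Average

variable {I}

lemma LL_mono {E E' : Finset (Fin m)} (h : E ⊆ E') : LL I E ≤ LL I E' :=
  fun _ hx i i' hii => hx i i' fun j hj => hii j (h hj)

lemma mem_LL_univ (x : Cell I → ℚ) : x ∈ LL I univ :=
  fun _ _ h => congrArg x (funext fun k => h k (mem_univ k))

noncomputable def avg (j : Fin m) (x : Cell I → ℚ) : Cell I → ℚ :=
  fun i => (∑ v : Fin (I j), x (Function.update i j v)) / I j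

lemma dot_avg_comm (j : Fin m) (x y : Cell I → ℚ) :
    dot I (avg j x) y = dot I x (avg j y) := by
  have hswap : ∑ p : Cell I × Fin (I j), x (Function.update p.1 j p.2) * y p.1
      = ∑ p : Cell I × Fin (I j), x p.1 * y (Function.update p.1 j p.2) := by
    let σ : Cell I × Fin (I j) ≃ Cell I × Fin (I j) :=
      { toFun p := (Function.update p.1 j p.2, p.1 j)
        invFun p := (Function.update p.1 j p.2, p.1 j)
        left_inv p := by simp
        right_inv p := by simp }
    exact Fintype.sum_equiv σ _ _ fun p => by simp [σ]
  simp only [dot, avg, div_mul_eq_mul_div, mul_div_assoc', ← Finset.sum_div, Finset.sum_mul,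
    Finset.mul_sum]
  rw [← Fintype.sum_prod_type', ← Fintype.sum_prod_type', hswap]

lemma avg_mem_LL_erase {E : Finset (Fin m)} {x : Cell I → ℚ} (hx : x ∈ LL I E) (j : Fin m) :
    avg j x ∈ LL I (E.erase j) := by
  intro i i' h
  refine congrArg (· / (I j : ℚ)) (Finset.sum_congr rfl fun v _ => hx _ _ fun k hk => ?_)
  rcases eq_or_ne k j with rfl | hkj
  · simp
  · simpa [Function.update_of_ne hkj] using h k (mem_erase.mpr ⟨hkj, hk⟩)

lemma avg_eq_self {E : Finset (Fin m)} {x : Cell I → ℚ} (hx : x ∈ LL I E) {j : Fin m}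
    (hj : j ∉ E) : avg j x = x := by
  funext i
  have hconst (v : Fin (I j)) : x (Function.update i j v) = x i :=
    hx _ _ fun k hk => Function.update_of_ne (ne_of_mem_of_not_mem hk hj) _ _
  have hIj : (I j : ℚ) ≠ 0 := Nat.cast_ne_zero.mpr (i j).pos.ne'
  simp [avg, hconst, hIj]

lemma avg_avg (j : Fin m) (x : Cell I → ℚ) : avg j (avg j x) = avg j x :=
  avg_eq_self (avg_mem_LL_erase (mem_LL_univ x) j) (notMem_erase j univ)

lemma avg_eq_zero_of_mem_NN {E : Finset (Fin m)} {x : Cell I → ℚ} (hx : x ∈ NN I E)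
    {j : Fin m} (hj : j ∈ E) : avg j x = 0 := by
  have hperp : dot I (avg j x) x = 0 :=
    hx.2 _ (le_iSup₂_of_le (f := fun k (_ : k ∈ E) => LL I (E.erase k)) j hj le_rfl
      (avg_mem_LL_erase hx.1 j))
  apply dotProduct_self_eq_zero.mp
  rw [← dot_eq_dotProduct, dot_avg_comm, avg_avg, dot_comm, hperp]

lemma NN_le_perp_LL {E F : Finset (Fin m)} (h : ¬ E ⊆ F) : NN I E ≤ perp I (LL I F) := by
  obtain ⟨j, hjE, hjF⟩ := not_subset.mp h
  rw [le_perp_comm]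
  intro y hy x hx
  rw [← avg_eq_self hy hjF, ← dot_avg_comm, avg_eq_zero_of_mem_NN hx hjE]
  exact zero_dotProduct y

end Average

section Decomposition

variable {I}

lemma LL_eq_sup_NN (E : Finset (Fin m)) :
    LL I E = (⨆ j ∈ E, LL I (E.erase j)) ⊔ NN I E := by
  have hW : (⨆ j ∈ E, LL I (E.erase j)) ≤ LL I E :=
    iSup₂_le fun j _ => LL_mono (erase_subset j E)
  rw [NN, inf_comm, ← sup_inf_assoc_of_le _ hW, (isCompl_perp _).sup_eq_top, top_inf_eq]

lemma LL_eq_iSup_NN (E : Finset (Fin m)) : LL I E = ⨆ E' ∈ E.powerset, NN I E' := by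
  induction E using Finset.strongInduction with
  | H E ih =>
    refine le_antisymm ?_
      (iSup₂_le fun E' hE' => inf_le_left.trans (LL_mono (mem_powerset.mp hE')))
    rw [LL_eq_sup_NN E]
    refine sup_le (iSup₂_le fun j hj => ?_) (le_iSup₂_of_le E (mem_powerset_self E) le_rfl)
    rw [ih _ (erase_ssubset hj)]
    exact biSup_mono fun E' hE' =>
      mem_powerset.mpr ((mem_powerset.mp hE').trans (erase_subset j E))

end Decomposition

section Marginal

variable {I}

lemma marg_eq_dot (y : Cell I → ℚ) (F : Finset (Fin m)) (i : Cell I) :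
    marg I y F i = dot I (fun j => if ∀ k ∈ F, j k = i k then 1 else 0) y :=
  Finset.sum_congr rfl fun j _ => by rw [ite_mul, one_mul, zero_mul]

lemma indicator_mem_LL (F : Finset (Fin m)) (i : Cell I) :
    (fun j => if ∀ k ∈ F, j k = i k then (1 : ℚ) else 0) ∈ LL I F := by
  intro j j' h
  simp only [show (∀ k ∈ F, j k = i k) ↔ ∀ k ∈ F, j' k = i k from
    forall₂_congr fun k hk => by rw [h k hk]]

lemma dot_eq_zero_of_marg_eq_zero {F : Finset (Fin m)} {x y : Cell I → ℚ} (hx : x ∈ LL I F)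
    (hy : ∀ i, marg I y F i = 0) : dot I x y = 0 := by
  rcases isEmpty_or_nonempty (Cell I) with _ | ⟨⟨b⟩⟩
  · simp [dot]
  -- `ρ` picks a representative of each `F`-class; summing over the fibres of `ρ` gives marginals
  let ρ : Cell I → Cell I := fun i => F.piecewise i b
  have hρ (j c : Cell I) : ρ j = ρ c ↔ ∀ k ∈ F, j k = ρ c k := by
    refine ⟨fun h k hk => ?_, fun h => funext fun k => ?_⟩
    · rw [← h]; exact (piecewise_eq_of_mem _ _ _ hk).symm
    · by_cases hk : k ∈ F
      · simpa [ρ, piecewise_eq_of_mem _ _ _ hk] using h k hk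
      · simp [ρ, piecewise_eq_of_notMem _ _ _ hk]
  have hxρ (i : Cell I) : x (ρ i) = x i := hx _ _ fun k hk => piecewise_eq_of_mem _ _ _ hk
  have hfibre (c : Cell I) :
      x (ρ c) * marg I y F (ρ c) = ∑ j with ρ j = ρ c, x (ρ j) * y j := by
    rw [marg, ← Finset.sum_filter, Finset.mul_sum]
    refine Finset.sum_congr (Finset.filter_congr fun j _ => (hρ j c).symm) fun j hj => ?_
    rw [(Finset.mem_filter.mp hj).2]
  calc dot I x y = ∑ i, x (ρ i) * y i := by simp only [dot, hxρ]
    _ = ∑ i ∈ univ.image ρ, x i * marg I y F i :=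
      (Finset.sum_image' _ fun c _ => hfibre c).symm
    _ = 0 := by simp [hy]

lemma mem_perp_LL_iff {F : Finset (Fin m)} {y : Cell I → ℚ} :
    y ∈ perp I (LL I F) ↔ ∀ i, marg I y F i = 0 :=
  ⟨fun h i => (marg_eq_dot y F i).trans (h _ (indicator_mem_LL F i)),
    fun h _ hx => dot_eq_zero_of_marg_eq_zero hx h⟩

lemma kern_eq_perp (Fs : Finset (Finset (Fin m))) : kern I Fs = perp I (⨆ F ∈ Fs, LL I F) := by
  ext y
  simp only [perp_iSup, Submodule.mem_iInf, mem_perp_LL_iff]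
  rfl

end Marginal

section Complex

variable {I}

lemma facets_subset (Δ : Finset (Finset (Fin m))) : facets Δ ⊆ Δ := filter_subset _ _

lemma exists_mem_facets_superset {Δ : Finset (Finset (Fin m))} {F : Finset (Fin m)}
    (hF : F ∈ Δ) : ∃ G ∈ facets Δ, F ⊆ G := by
  obtain ⟨G, hFG, hG, hGmax⟩ := Δ.exists_le_maximal hF
  exact ⟨G, mem_filter.mpr ⟨hG, fun G' hG' hGG' => (hGmax hG' hGG').antisymm hGG'⟩, hFG⟩

lemma isComplex_powerset (D : Finset (Fin m)) : IsComplex D.powerset :=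
  fun _ hF _ hF' => mem_powerset.mpr (hF'.trans (mem_powerset.mp hF))

lemma IsComplex.delFacet {Δ : Finset (Finset (Fin m))} (hΔ : IsComplex Δ)
    (D : Finset (Fin m)) : IsComplex (delFacet Δ D) := by
  intro F hF F' hF'
  obtain ⟨hFΔ, D', hD', hFD'⟩ := mem_filter.mp hF
  exact mem_filter.mpr ⟨hΔ F hFΔ F' hF', D', hD', hF'.trans hFD'⟩

lemma delFacet_union_sdiff {Δ : Finset (Finset (Fin m))} (hΔ : IsComplex Δ) {D : Finset (Fin m)}
    (hD : D ∈ Δ) : delFacet Δ D ∪ (D.powerset \ delFacet Δ D) = Δ := by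
  ext E
  refine ⟨fun hE => ?_, fun hE => ?_⟩
  · rcases mem_union.mp hE with hE | hE
    · exact (mem_filter.mp hE).1
    · exact hΔ D hD E (mem_powerset.mp (mem_sdiff.mp hE).1)
  · obtain ⟨G, hG, hEG⟩ := exists_mem_facets_superset hE
    by_cases hGD : G = D
    · by_cases hE' : E ∈ delFacet Δ D
      · exact mem_union_left _ hE'
      · exact mem_union_right _ (mem_sdiff.mpr ⟨mem_powerset.mpr (hGD ▸ hEG), hE'⟩)
    · exact mem_union_left _ (mem_filter.mpr ⟨hE, G, mem_erase.mpr ⟨hGD, hG⟩, hEG⟩)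

lemma rowsp_eq_iSup_NN {Δ : Finset (Finset (Fin m))} (hΔ : IsComplex Δ) :
    rowsp I Δ = ⨆ E ∈ Δ, NN I E := by
  refine le_antisymm (iSup₂_le fun F hF => ?_) (iSup₂_le fun E hE => ?_)
  · rw [LL_eq_iSup_NN]
    exact biSup_mono fun E hE => hΔ F (facets_subset Δ hF) E (mem_powerset.mp hE)
  · obtain ⟨G, hG, hEG⟩ := exists_mem_facets_superset hE
    exact le_iSup₂_of_le G hG (inf_le_left.trans (LL_mono hEG))

lemma kern_facets (Δ : Finset (Finset (Fin m))) : kern I (facets Δ) = perp I (rowsp I Δ) :=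
  kern_eq_perp _

lemma NN_le_perp_rowsp {Δ : Finset (Finset (Fin m))} (hΔ : IsComplex Δ) {E : Finset (Fin m)}
    (hE : E ∉ Δ) : NN I E ≤ perp I (rowsp I Δ) := by
  simp only [rowsp, perp_iSup, le_iInf_iff]
  exact fun F hF => NN_le_perp_LL fun hEF => hE (hΔ F (facets_subset Δ hF) E hEF)

lemma rowsp_eq_rowsp_delFacet_sup {Δ : Finset (Finset (Fin m))} (hΔ : IsComplex Δ)
    {D : Finset (Fin m)} (hD : D ∈ Δ) :
    rowsp I Δ = rowsp I (delFacet Δ D) ⊔ ⨆ E ∈ D.powerset \ delFacet Δ D, NN I E := by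
  rw [rowsp_eq_iSup_NN hΔ, rowsp_eq_iSup_NN (hΔ.delFacet D), ← Finset.iSup_union,
    delFacet_union_sdiff hΔ hD]

lemma rowsp_powerset_eq_sup (D : Finset (Fin m)) (Δ : Finset (Finset (Fin m))) :
    rowsp I D.powerset = (⨆ E ∈ D.powerset ∩ Δ, NN I E) ⊔ ⨆ E ∈ D.powerset \ Δ, NN I E := by
  rw [rowsp_eq_iSup_NN (isComplex_powerset D), ← Finset.iSup_union, union_comm,
    sdiff_union_inter]

end Complex

theorem stmt9 (Δ : Finset (Finset (Fin m))) (hΔ : IsComplex Δ)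
    (D : Finset (Fin m)) (hD : D ∈ facets Δ) :
    rowsp I Δ ⊓ kern I (facets (delFacet Δ D))
      = rowsp I D.powerset ⊓ kern I (facets (delFacet Δ D)) ∧
    rowsp I D.powerset ⊓ kern I (facets (delFacet Δ D))
      = ⨆ E ∈ D.powerset \ delFacet Δ D, NN I E := by
  have hΔ' : IsComplex (delFacet Δ D) := hΔ.delFacet D
  have hnew : (⨆ E ∈ D.powerset \ delFacet Δ D, NN I E) ≤ perp I (rowsp I (delFacet Δ D)) :=
    iSup₂_le fun E hE => NN_le_perp_rowsp hΔ' (mem_sdiff.mp hE).2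
  have hpow : rowsp I D.powerset ⊓ kern I (facets (delFacet Δ D))
      = ⨆ E ∈ D.powerset \ delFacet Δ D, NN I E := by
    rw [rowsp_powerset_eq_sup D (delFacet Δ D), kern_facets]
    refine sup_inf_perp_of_le ?_ hnew
    rw [rowsp_eq_iSup_NN hΔ']
    exact biSup_mono fun E hE => (mem_inter.mp hE).2
  refine ⟨?_, hpow⟩
  rw [hpow, kern_facets, rowsp_eq_rowsp_delFacet_sup hΔ (facets_subset Δ hD)]
  exact sup_inf_perp_of_le le_rfl hnew

end Hier
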